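/- Let V be an n-dimensional complex vector space, 0 < m < n, and Z ⊆ ⋀^mV a linear subspace containing no nonzero decomposable vector. Let Λ ≠ Λ' be m-dimensional subspaces of V with Plücker vectors u and u'. The following are equivalent: (a) π_Z(Λ) = π_Z(Λ'); (b) there exists a nonzero ω ∈ Z with π_ω(Λ) = π_ω(Λ'); (c) there exist scalars a, b ∈ ℂ, not both zero, such that a·u + b·u' is a nonzero element of Z (i.e., the projective line through the Plücker points of Λ and Λ' meets ℙZ). -/

import Mathlib

/-!
A Plücker vector determines its subspace: `Λ = {w | w ∧ u = 0}`, so the Plücker vectors of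
`Λ ≠ Λ'` are not proportional. Being nonzero and decomposable, neither lies in `Z`. Hence
`π_Z(Λ) = π_Z(Λ')` holds exactly when `Z` contains some `a • u + b • u'` with `a, b ≠ 0`, and
such a vector `ω` is also a center with `π_ω(Λ) = π_ω(Λ')`, since `ℂ ω ≤ Z`.
-/

open ExteriorAlgebra

/-- A degree-`m` element of the exterior algebra is decomposable if it is the wedge of `m`
vectors. -/
def Decomposable {V : Type*} [AddCommGroup V] [Module ℂ V] (m : ℕ)
    (ω : ExteriorAlgebra ℂ V) : Prop :=
  ∃ v : Fin m → V, ω = ιMulti ℂ m v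

/-- `u` is a Plücker vector of the `m`-dimensional subspace `Λ`. -/
def IsPluckerVector {V : Type*} [AddCommGroup V] [Module ℂ V] (m : ℕ)
    (Λ : Submodule ℂ V) (u : ExteriorAlgebra ℂ V) : Prop :=
  ∃ v : Fin m → V, Submodule.span ℂ (Set.range v) = Λ ∧ u = ιMulti ℂ m v

/-- The images of `u` and `u'` in the quotient `(⋀V)/Z` span the same line; this expresses
`π_Z(Λ) = π_Z(Λ')` for subspaces with Plücker vectors `u` and `u'`. -/
def ProjEq {V : Type*} [AddCommGroup V] [Module ℂ V] (Z : Submodule ℂ (ExteriorAlgebra ℂ V))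
    (u u' : ExteriorAlgebra ℂ V) : Prop :=
  Submodule.span ℂ {Z.mkQ u} = Submodule.span ℂ {Z.mkQ u'}

section ExteriorAlgebra

variable {K E : Type*} [Field K] [AddCommGroup E] [Module K E] {n : ℕ}

theorem ιMulti_ne_zero_of_linearIndependent {v : Fin n → E} (hv : LinearIndependent K v) :
    ιMulti K n v ≠ 0 := by
  have := (exteriorPower.ιMulti_family_linearIndependent_field (n := n) hv).ne_zero
    (Set.powersetCard.ofFinEmbEquiv (OrderIso.refl (Fin n)).toOrderEmbedding)
  simp only [exteriorPower.ιMulti_family, Equiv.symm_apply_apply] at this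
  exact fun h ↦ this (Subtype.ext h)

theorem ι_mul_ιMulti_eq_ιMulti_cons (w : E) (v : Fin n → E) :
    ι K w * ιMulti K n v = ιMulti K (n + 1) (Fin.cons w v) := by
  rw [ιMulti_succ_apply, Fin.cons_zero]
  rfl

theorem ι_mul_ιMulti_self (v : Fin n → E) (i : Fin n) : ι K (v i) * ιMulti K n v = 0 := by
  rw [ι_mul_ιMulti_eq_ιMulti_cons]
  exact (ιMulti K (n + 1)).map_eq_zero_of_eq _ (by simp) (Fin.succ_ne_zero i).symm

theorem ι_mul_ιMulti_eq_zero_iff {v : Fin n → E} (hv : LinearIndependent K v) (w : E) :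
    ι K w * ιMulti K n v = 0 ↔ w ∈ Submodule.span K (Set.range v) := by
  refine ⟨fun h ↦ ?_, fun h ↦ ?_⟩
  · by_contra hw
    exact ιMulti_ne_zero_of_linearIndependent (linearIndependent_finCons.mpr ⟨hv, hw⟩)
      ((ι_mul_ιMulti_eq_ιMulti_cons w v).symm.trans h)
  · have hker : Submodule.span K (Set.range v) ≤
        LinearMap.ker (LinearMap.mulRight K (ιMulti K n v) ∘ₗ ι K) := by
      rw [Submodule.span_le]
      rintro _ ⟨i, rfl⟩
      exact ι_mul_ιMulti_self v i
    exact hker h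

theorem span_range_le_of_ιMulti_eq_smul {v v' : Fin n → E} (hv : LinearIndependent K v)
    {c : K} (hc : c ≠ 0) (h : ιMulti K n v' = c • ιMulti K n v) :
    Submodule.span K (Set.range v') ≤ Submodule.span K (Set.range v) := by
  rw [Submodule.span_le]
  rintro _ ⟨i, rfl⟩
  rw [SetLike.mem_coe, ← ι_mul_ιMulti_eq_zero_iff hv]
  have h0 := ι_mul_ιMulti_self (K := K) v' i
  rw [h, mul_smul_comm] at h0
  exact (smul_eq_zero.mp h0).resolve_left hc

end ExteriorAlgebra

namespace IsPluckerVector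

variable {V : Type*} [AddCommGroup V] [Module ℂ V] {m : ℕ} {Λ Λ' : Submodule ℂ V}
  {u u' : ExteriorAlgebra ℂ V}

theorem decomposable (hu : IsPluckerVector m Λ u) : Decomposable m u :=
  hu.imp fun _ hv ↦ hv.2

theorem exists_linearIndependent (hu : IsPluckerVector m Λ u) (hΛ : Module.finrank ℂ Λ = m) :
    ∃ v : Fin m → V, LinearIndependent ℂ v ∧ Submodule.span ℂ (Set.range v) = Λ ∧
      u = ιMulti ℂ m v := by
  obtain ⟨v, hspan, rfl⟩ := hu
  refine ⟨v, ?_, hspan, rfl⟩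
  rw [linearIndependent_iff_card_eq_finrank_span, Fintype.card_fin, Set.finrank, hspan, hΛ]

theorem ne_zero (hu : IsPluckerVector m Λ u) (hΛ : Module.finrank ℂ Λ = m) : u ≠ 0 := by
  obtain ⟨v, hv, -, rfl⟩ := hu.exists_linearIndependent hΛ
  exact ιMulti_ne_zero_of_linearIndependent hv

theorem eq_of_eq_smul (hu : IsPluckerVector m Λ u) (hu' : IsPluckerVector m Λ' u')
    (hΛ : Module.finrank ℂ Λ = m) (hΛ' : Module.finrank ℂ Λ' = m) {c : ℂ} (h : u' = c • u) :
    Λ' = Λ := by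
  obtain ⟨v, hv, rfl, rfl⟩ := hu.exists_linearIndependent hΛ
  obtain ⟨v', hv', rfl, rfl⟩ := hu'.exists_linearIndependent hΛ'
  have hc : c ≠ 0 := by
    rintro rfl
    exact ιMulti_ne_zero_of_linearIndependent hv' (h.trans (zero_smul ℂ _))
  refine le_antisymm (span_range_le_of_ιMulti_eq_smul hv hc h)
    (span_range_le_of_ιMulti_eq_smul hv' (inv_ne_zero hc) ?_)
  rw [h, inv_smul_smul₀ hc]

end IsPluckerVector

section Quotient

variable {K M : Type*} [Field K] [AddCommGroup M] [Module K M] {Z : Submodule K M} {u u' : M}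

theorem span_mkQ_eq_of_smul_add_smul_mem {a b : K} (ha : a ≠ 0) (hb : b ≠ 0)
    (h : a • u + b • u' ∈ Z) : K ∙ Z.mkQ u = K ∙ Z.mkQ u' := by
  have hab : a • Z.mkQ u = (-b) • Z.mkQ u' := by
    rw [neg_smul, eq_neg_iff_add_eq_zero, ← map_smul, ← map_smul, ← map_add]
    exact (Submodule.Quotient.mk_eq_zero Z).mpr h
  calc K ∙ Z.mkQ u = K ∙ a • Z.mkQ u := (Submodule.span_singleton_smul_eq ha.isUnit _).symm
    _ = K ∙ (-b) • Z.mkQ u' := by rw [hab]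
    _ = K ∙ Z.mkQ u' := Submodule.span_singleton_smul_eq (neg_ne_zero.mpr hb).isUnit _

theorem exists_sub_smul_mem_of_span_mkQ_eq (h : K ∙ Z.mkQ u = K ∙ Z.mkQ u') :
    ∃ c : K, u' - c • u ∈ Z := by
  have hmem : Z.mkQ u' ∈ K ∙ Z.mkQ u := h ▸ Submodule.mem_span_singleton_self _
  obtain ⟨c, hc⟩ := Submodule.mem_span_singleton.mp hmem
  refine ⟨c, (Submodule.Quotient.mk_eq_zero Z).mp ?_⟩
  rw [← Submodule.mkQ_apply, map_sub, map_smul, hc, sub_self]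

theorem span_mkQ_eq_iff_exists_smul_add_smul_mem (hu : u ∉ Z) (hu' : u' ∉ Z)
    (hind : ∀ c : K, u' ≠ c • u) :
    K ∙ Z.mkQ u = K ∙ Z.mkQ u' ↔
      ∃ a b : K, ¬(a = 0 ∧ b = 0) ∧ a • u + b • u' ∈ Z ∧ a • u + b • u' ≠ 0 := by
  constructor
  · intro h
    obtain ⟨c, hc⟩ := exists_sub_smul_mem_of_span_mkQ_eq h
    have hcomb : (-c) • u + (1 : K) • u' = u' - c • u := by
      rw [neg_smul, one_smul, neg_add_eq_sub]
    exact ⟨-c, 1, by simp, hcomb ▸ hc, hcomb ▸ sub_ne_zero.mpr (hind c)⟩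
  · rintro ⟨a, b, -, hmem, hne⟩
    have ha : a ≠ 0 := by
      rintro rfl
      rw [zero_smul, zero_add] at hmem hne
      exact hu' ((Z.smul_mem_iff (left_ne_zero_of_smul hne)).mp hmem)
    have hb : b ≠ 0 := by
      rintro rfl
      rw [zero_smul, add_zero] at hmem hne
      exact hu ((Z.smul_mem_iff (left_ne_zero_of_smul hne)).mp hmem)
    exact span_mkQ_eq_of_smul_add_smul_mem ha hb hmem

end Quotient

theorem stmt2_general {V : Type*} [AddCommGroup V] [Module ℂ V]
    (m : ℕ)
    (Z : Submodule ℂ (ExteriorAlgebra ℂ V))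
    (hZ : ∀ z ∈ Z, z ≠ 0 → ¬ Decomposable m z)
    (Λ Λ' : Submodule ℂ V)
    (hΛ : Module.finrank ℂ Λ = m) (hΛ' : Module.finrank ℂ Λ' = m) (hne : Λ ≠ Λ')
    (u u' : ExteriorAlgebra ℂ V)
    (hu : IsPluckerVector m Λ u) (hu' : IsPluckerVector m Λ' u') :
    (ProjEq Z u u' ↔ ∃ ω ∈ Z, ω ≠ 0 ∧ ProjEq (Submodule.span ℂ {ω}) u u') ∧
    (ProjEq Z u u' ↔ ∃ a b : ℂ, ¬(a = 0 ∧ b = 0) ∧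
      a • u + b • u' ∈ Z ∧ a • u + b • u' ≠ 0) := by
  have key : ∀ W ≤ Z, ProjEq W u u' ↔
      ∃ a b : ℂ, ¬(a = 0 ∧ b = 0) ∧ a • u + b • u' ∈ W ∧ a • u + b • u' ≠ 0 :=
    fun W hW ↦ span_mkQ_eq_iff_exists_smul_add_smul_mem
      (fun h ↦ hZ u (hW h) (hu.ne_zero hΛ) hu.decomposable)
      (fun h ↦ hZ u' (hW h) (hu'.ne_zero hΛ') hu'.decomposable)
      (fun _ h ↦ hne (hu.eq_of_eq_smul hu' hΛ hΛ' h).symm)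
  refine ⟨?_, key Z le_rfl⟩
  rw [key Z le_rfl]
  constructor
  · rintro ⟨a, b, hab, hmem, hne0⟩
    refine ⟨_, hmem, hne0, (key _ ((Submodule.span_singleton_le_iff_mem _ _).mpr hmem)).mpr ?_⟩
    exact ⟨a, b, hab, Submodule.mem_span_singleton_self _, hne0⟩
  · rintro ⟨ω, hω, -, hproj⟩
    have hωZ := (Submodule.span_singleton_le_iff_mem _ _).mpr hω
    obtain ⟨a, b, hab, hmem, hne0⟩ := (key _ hωZ).mp hproj
    exact ⟨a, b, hab, hωZ hmem, hne0⟩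

/-- For an `n`-dimensional complex `V`, `0 < m < n`, a center `Z ⊆ ⋀^mV`
containing no nonzero decomposable vector, and distinct `m`-dimensional subspaces
`Λ ≠ Λ'` with Plücker vectors `u, u'`, the following are equivalent:
(a) `π_Z(Λ) = π_Z(Λ')`; (b) there is a nonzero `ω ∈ Z` with `π_ω(Λ) = π_ω(Λ')`;
(c) some nontrivial combination `a•u + b•u'` is a nonzero element of `Z`. -/
theorem stmt2 {V : Type*} [AddCommGroup V] [Module ℂ V] [FiniteDimensional ℂ V]
    (n m : ℕ) (hV : Module.finrank ℂ V = n) (hm : 0 < m) (hmn : m < n)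
    (Z : Submodule ℂ (ExteriorAlgebra ℂ V)) (hZm : Z ≤ ⋀[ℂ]^m V)
    (hZ : ∀ z ∈ Z, z ≠ 0 → ¬ Decomposable m z)
    (Λ Λ' : Submodule ℂ V)
    (hΛ : Module.finrank ℂ Λ = m) (hΛ' : Module.finrank ℂ Λ' = m) (hne : Λ ≠ Λ')
    (u u' : ExteriorAlgebra ℂ V)
    (hu : IsPluckerVector m Λ u) (hu' : IsPluckerVector m Λ' u') :
    (ProjEq Z u u' ↔ ∃ ω ∈ Z, ω ≠ 0 ∧ ProjEq (Submodule.span ℂ {ω}) u u') ∧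
    (ProjEq Z u u' ↔ ∃ a b : ℂ, ¬(a = 0 ∧ b = 0) ∧
      a • u + b • u' ∈ Z ∧ a • u + b • u' ≠ 0) :=
  stmt2_general m Z hZ Λ Λ' hΛ hΛ' hne u u' hu hu'
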